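/- Let φ : E(𝒜) → E(ℬ) be a sequential isomorphism between effect sets of von Neumann algebras and P ∈ 𝒜 a projection. Then P is an abelian projection (P E(𝒜) P is a commutative set) if and only if φ(P) is an abelian projection in ℬ. -/

import Mathlib

/-!
Gudder–Nagy: for effects `a, b` the sequential products `a ∘ b = √a b √a` and `b ∘ a` agree
exactly when `a` and `b` commute: if they agree, `√a √b` is normal, and as a product of positive
elements it has real spectrum, so it is self-adjoint and `√a`, `√b` commute. Hence an injective map preserving sequential products also
preserves and reflects commutativity. Since `√P = P` for a projection `P`, the compression
`P a P` is the sequential product `P ∘ a`; so `φ` maps `P E(M) P` onto `φ(P) E(N) φ(P)`, where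
`φ(P) = φ(P ∘ P) = φ(P)²` is again a projection, and commutativity transfers in both directions.
-/

/-- The effects of a von Neumann algebra `M`: elements `a` of `M` with `0 ≤ a ≤ 1`
in the Loewner order. -/
def IsVNEffect {H : Type*} [NormedAddCommGroup H] [InnerProductSpace ℂ H] [CompleteSpace H]
    (M : VonNeumannAlgebra H) (a : H →L[ℂ] H) : Prop :=
  a ∈ M ∧ 0 ≤ a ∧ a ≤ 1

open CFC

section CStarAlgebra

variable {A : Type*} [CStarAlgebra A] [PartialOrder A] [StarOrderedRing A]

lemma CFC.sqrt_mul_self_mul_sqrt {a : A} (ha : 0 ≤ a) : sqrt a * a * sqrt a = a * a := by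
  have hc : Commute (sqrt a) a := (Commute.refl a).cfcₙ_nnreal _
  rw [hc.eq, mul_assoc, sqrt_mul_sqrt_self a ha]

lemma spectrumRestricts_mul_of_nonneg {p q : A} (hp : 0 ≤ p) (hq : 0 ≤ q) :
    SpectrumRestricts (p * q) Complex.reCLM := by
  have hpq : p * q = sqrt p * (sqrt p * q) := by rw [← mul_assoc, sqrt_mul_sqrt_self p hp]
  have hconj : IsSelfAdjoint (sqrt p * q * sqrt p) :=
    .of_nonneg (conjugate_nonneg_of_nonneg hq (sqrt_nonneg p))
  rw [hpq]
  exact hconj.spectrumRestricts.mul_comm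

lemma commute_of_sqrt_mul_mul_sqrt_eq {a b : A} (ha : 0 ≤ a) (hb : 0 ≤ b)
    (h : sqrt a * b * sqrt a = sqrt b * a * sqrt b) : Commute a b := by
  set u := sqrt a * sqrt b
  have hsa : IsSelfAdjoint (sqrt a) := .of_nonneg (sqrt_nonneg a)
  have hsb : IsSelfAdjoint (sqrt b) := .of_nonneg (sqrt_nonneg b)
  have hstar : star u = sqrt b * sqrt a := by rw [star_mul, hsa.star_eq, hsb.star_eq]
  have : IsStarNormal u := by
    refine ⟨?_⟩
    rw [commute_iff_eq, hstar]
    calc sqrt b * sqrt a * (sqrt a * sqrt b) = sqrt b * (sqrt a * sqrt a) * sqrt b := by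
          noncomm_ring
      _ = sqrt a * (sqrt b * sqrt b) * sqrt a := by
          rw [sqrt_mul_sqrt_self a ha, sqrt_mul_sqrt_self b hb, h]
      _ = sqrt a * sqrt b * (sqrt b * sqrt a) := by noncomm_ring
  have hu : IsSelfAdjoint u := QuasispectrumRestricts.isSelfAdjoint u
    (spectrumRestricts_mul_of_nonneg (sqrt_nonneg a) (sqrt_nonneg b))
  have hc : Commute (sqrt a) (sqrt b) := (hsa.commute_iff hsb).2 hu
  rw [← sqrt_mul_sqrt_self a ha, ← sqrt_mul_sqrt_self b hb]
  exact (hc.mul_left hc).mul_right (hc.mul_left hc)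

lemma Commute.sqrt_mul_mul_sqrt_eq {a b : A} (ha : 0 ≤ a) (hb : 0 ≤ b) (h : Commute a b) :
    sqrt a * b * sqrt a = sqrt b * a * sqrt b := by
  have hab : Commute (sqrt a) b := h.cfcₙ_nnreal _
  have hba : Commute (sqrt b) a := h.symm.cfcₙ_nnreal _
  rw [hab.eq, hba.eq, mul_assoc, mul_assoc, sqrt_mul_sqrt_self a ha, sqrt_mul_sqrt_self b hb,
    h.eq]

theorem sqrt_mul_mul_sqrt_eq_iff_commute {a b : A} (ha : 0 ≤ a) (hb : 0 ≤ b) :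
    sqrt a * b * sqrt a = sqrt b * a * sqrt b ↔ Commute a b :=
  ⟨commute_of_sqrt_mul_mul_sqrt_eq ha hb, Commute.sqrt_mul_mul_sqrt_eq ha hb⟩

end CStarAlgebra

section VonNeumannAlgebra

variable {H : Type*} [NormedAddCommGroup H] [InnerProductSpace ℂ H] [CompleteSpace H]
  {M : VonNeumannAlgebra H}

lemma VonNeumannAlgebra.sqrt_mem {s : H →L[ℂ] H} (hs : s ∈ M) : sqrt s ∈ M := by
  rw [← SetLike.mem_coe, ← M.centralizer_centralizer, Set.mem_centralizer_iff]
  intro z hz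
  have hc : Commute (sqrt s) z := Commute.cfcₙ_nnreal (Set.mem_centralizer_iff.mp hz s hs) _
  exact hc.symm.eq

lemma IsVNEffect.sqrt_mul_mul_sqrt {a b : H →L[ℂ] H} (ha : IsVNEffect M a)
    (hb : IsVNEffect M b) : IsVNEffect M (sqrt a * b * sqrt a) := by
  obtain ⟨haM, ha0, ha1⟩ := ha
  obtain ⟨hbM, hb0, hb1⟩ := hb
  have hsaM := VonNeumannAlgebra.sqrt_mem haM
  refine ⟨mul_mem (mul_mem hsaM hbM) hsaM, conjugate_nonneg_of_nonneg hb0 (sqrt_nonneg a), ?_⟩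
  calc sqrt a * b * sqrt a ≤ sqrt a * 1 * sqrt a :=
        conjugate_le_conjugate_of_nonneg hb1 (sqrt_nonneg a)
    _ = a := by rw [mul_one, sqrt_mul_sqrt_self a ha0]
    _ ≤ 1 := ha1

variable (M) in
abbrev VNEffect : Type _ := {a : H →L[ℂ] H // IsVNEffect M a}

namespace VNEffect

noncomputable def seq (a b : VNEffect M) : VNEffect M :=
  ⟨sqrt a.1 * b * sqrt a.1, a.2.sqrt_mul_mul_sqrt b.2⟩

lemma seq_eq_seq_iff {a b : VNEffect M} : seq a b = seq b a ↔ Commute (a : H →L[ℂ] H) b := by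
  rw [Subtype.ext_iff]
  exact sqrt_mul_mul_sqrt_eq_iff_commute a.2.2.1 b.2.2.1

lemma coe_seq_of_mul_self {P : VNEffect M} (hP : (P : H →L[ℂ] H) * P = P) (a : VNEffect M) :
    (seq P a : H →L[ℂ] H) = P * a * P := by
  simp only [seq, sqrt_unique hP P.2.2.1]

lemma seq_self_of_mul_self {P : VNEffect M} (hP : (P : H →L[ℂ] H) * P = P) : seq P P = P :=
  Subtype.ext <| by rw [coe_seq_of_mul_self hP, hP, hP]

end VNEffect

end VonNeumannAlgebra

section SequentialMap

open VNEffect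

variable {H K : Type*} [NormedAddCommGroup H] [InnerProductSpace ℂ H] [CompleteSpace H]
  [NormedAddCommGroup K] [InnerProductSpace ℂ K] [CompleteSpace K]
  {M : VonNeumannAlgebra H} {N : VonNeumannAlgebra K}

def IsSequentialMap (φ : VNEffect M → VNEffect N) : Prop :=
  ∀ a b, φ (seq a b) = seq (φ a) (φ b)

namespace IsSequentialMap

variable {φ : VNEffect M → VNEffect N} (hφ : IsSequentialMap φ)
include hφ

lemma commute_map_iff (hinj : Function.Injective φ) {a b : VNEffect M} :
    Commute (φ a : K →L[ℂ] K) (φ b) ↔ Commute (a : H →L[ℂ] H) b := by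
  rw [← seq_eq_seq_iff, ← seq_eq_seq_iff, ← hφ, ← hφ, hinj.eq_iff]

lemma map_mul_self {P : VNEffect M} (hP : (P : H →L[ℂ] H) * P = P) :
    (φ P : K →L[ℂ] K) * φ P = φ P := by
  have h := congrArg Subtype.val (hφ P P)
  rw [seq_self_of_mul_self hP] at h
  change _ = sqrt _ * _ * sqrt _ at h
  rw [sqrt_mul_self_mul_sqrt (φ P).2.2.1] at h
  exact h.symm

lemma coe_map_seq_of_mul_self {P : VNEffect M} (hP : (P : H →L[ℂ] H) * P = P)
    (a : VNEffect M) : (φ (seq P a) : K →L[ℂ] K) = φ P * φ a * φ P := by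
  rw [hφ, coe_seq_of_mul_self (hφ.map_mul_self hP)]

end IsSequentialMap

end SequentialMap

theorem sequentialIso_preserves_abelian_projections_general
    {H K : Type*} [NormedAddCommGroup H] [InnerProductSpace ℂ H] [CompleteSpace H]
    [NormedAddCommGroup K] [InnerProductSpace ℂ K] [CompleteSpace K]
    (M : VonNeumannAlgebra H) (N : VonNeumannAlgebra K)
    (φ : {a : H →L[ℂ] H // IsVNEffect M a} → {b : K →L[ℂ] K // IsVNEffect N b})
    (hbij : Function.Bijective φ)
    (hseq : ∀ (a b : {a : H →L[ℂ] H // IsVNEffect M a})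
        (h : IsVNEffect M (CFC.sqrt (a : H →L[ℂ] H) * (b : H →L[ℂ] H) * CFC.sqrt (a : H →L[ℂ] H))),
      (φ ⟨CFC.sqrt (a : H →L[ℂ] H) * (b : H →L[ℂ] H) * CFC.sqrt (a : H →L[ℂ] H), h⟩ : K →L[ℂ] K)
        = CFC.sqrt (φ a : K →L[ℂ] K) * (φ b : K →L[ℂ] K) * CFC.sqrt (φ a : K →L[ℂ] K))
    (P : {a : H →L[ℂ] H // IsVNEffect M a})
    (hP2 : (P : H →L[ℂ] H) * (P : H →L[ℂ] H) = P) :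
    (∀ a b : {a : H →L[ℂ] H // IsVNEffect M a},
        ((P : H →L[ℂ] H) * a * P) * ((P : H →L[ℂ] H) * b * P)
          = ((P : H →L[ℂ] H) * b * P) * ((P : H →L[ℂ] H) * a * P)) ↔
    (∀ c d : {b : K →L[ℂ] K // IsVNEffect N b},
        ((φ P : K →L[ℂ] K) * c * (φ P : K →L[ℂ] K)) * ((φ P : K →L[ℂ] K) * d * (φ P : K →L[ℂ] K))
          = ((φ P : K →L[ℂ] K) * d * (φ P : K →L[ℂ] K))
            * ((φ P : K →L[ℂ] K) * c * (φ P : K →L[ℂ] K))) := by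
  have hφ : IsSequentialMap φ := fun a b => Subtype.ext (hseq a b _)
  have compress := VNEffect.coe_seq_of_mul_self hP2
  have map_compress := hφ.coe_map_seq_of_mul_self hP2
  constructor
  · intro hM c d
    obtain ⟨a, rfl⟩ := hbij.2 c
    obtain ⟨b, rfl⟩ := hbij.2 d
    rw [← map_compress a, ← map_compress b]
    exact (hφ.commute_map_iff hbij.1).2 (by rw [compress, compress]; exact hM a b)
  · intro hN a b
    rw [← compress a, ← compress b]
    exact (hφ.commute_map_iff hbij.1).1 (by rw [map_compress, map_compress]; exact hN _ _)

/-- A sequential isomorphism preserves abelian projections in both directions: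
a projection `P` has commutative compression `P E(M) P` iff `φ P` does. -/
theorem sequentialIso_preserves_abelian_projections
    {H K : Type*} [NormedAddCommGroup H] [InnerProductSpace ℂ H] [CompleteSpace H]
    [NormedAddCommGroup K] [InnerProductSpace ℂ K] [CompleteSpace K]
    (M : VonNeumannAlgebra H) (N : VonNeumannAlgebra K)
    (φ : {a : H →L[ℂ] H // IsVNEffect M a} → {b : K →L[ℂ] K // IsVNEffect N b})
    (hbij : Function.Bijective φ)
    (hseq : ∀ (a b : {a : H →L[ℂ] H // IsVNEffect M a})
        (h : IsVNEffect M (CFC.sqrt (a : H →L[ℂ] H) * (b : H →L[ℂ] H) * CFC.sqrt (a : H →L[ℂ] H))),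
      (φ ⟨CFC.sqrt (a : H →L[ℂ] H) * (b : H →L[ℂ] H) * CFC.sqrt (a : H →L[ℂ] H), h⟩ : K →L[ℂ] K)
        = CFC.sqrt (φ a : K →L[ℂ] K) * (φ b : K →L[ℂ] K) * CFC.sqrt (φ a : K →L[ℂ] K))
    (P : {a : H →L[ℂ] H // IsVNEffect M a})
    (hPsa : IsSelfAdjoint (P : H →L[ℂ] H))
    (hP2 : (P : H →L[ℂ] H) * (P : H →L[ℂ] H) = P) :
    (∀ a b : {a : H →L[ℂ] H // IsVNEffect M a},
        ((P : H →L[ℂ] H) * a * P) * ((P : H →L[ℂ] H) * b * P)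
          = ((P : H →L[ℂ] H) * b * P) * ((P : H →L[ℂ] H) * a * P)) ↔
    (∀ c d : {b : K →L[ℂ] K // IsVNEffect N b},
        ((φ P : K →L[ℂ] K) * c * (φ P : K →L[ℂ] K)) * ((φ P : K →L[ℂ] K) * d * (φ P : K →L[ℂ] K))
          = ((φ P : K →L[ℂ] K) * d * (φ P : K →L[ℂ] K))
            * ((φ P : K →L[ℂ] K) * c * (φ P : K →L[ℂ] K))) :=
  sequentialIso_preserves_abelian_projections_general M N φ hbij hseq P hP2
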